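/- Let Ω = [n]^r with 1 ≤ r ≤ n, μ the uniform distribution on Ω, and ν the uniform distribution on the set S of tuples with distinct entries. Then TV(μ,ν) ≤ (r-1)^2/n. -/
import Mathlib

lemma key_nat (n : ℕ) : ∀ r : ℕ, r ≤ n → n ^ r ≤ (r - 1) ^ 2 * n ^ (r - 1) + n.descFactorial r := by
  intro r
  induction r with
  | zero => simp
  | succ r ih =>
    intro h
    have hr : r ≤ n := Nat.le_of_succ_le h
    have ih' := ih hr
    rcases Nat.eq_zero_or_pos r with h0 | hpos
    · subst h0; simp
    · have h1 : n ^ (r + 1) = n * n ^ r := by ring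
      have hdesc : n.descFactorial (r + 1) = (n - r) * n.descFactorial r :=
        Nat.descFactorial_succ n r
      have hd_le : n.descFactorial r ≤ n ^ r := Nat.descFactorial_le_pow n r
      -- n^(r+1) = n * n^r ≤ n * ((r-1)^2 * n^(r-1) + desc r)
      --        = (r-1)^2 * n^r + n * desc r
      --        = (r-1)^2 * n^r + (n - r) * desc r + r * desc r
      --        ≤ (r-1)^2 * n^r + desc (r+1) + r * n^r ≤ r^2 * n^r + desc (r+1)
      have hnr : n * n.descFactorial r = (n - r) * n.descFactorial r + r * n.descFactorial r := by
        rw [← Nat.add_mul, Nat.sub_add_cancel hr]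
      calc n ^ (r + 1) = n * n ^ r := h1
        _ ≤ n * ((r - 1) ^ 2 * n ^ (r - 1) + n.descFactorial r) := Nat.mul_le_mul_left n ih'
        _ = (r - 1) ^ 2 * (n * n ^ (r - 1)) + n * n.descFactorial r := by ring
        _ = (r - 1) ^ 2 * n ^ r + ((n - r) * n.descFactorial r + r * n.descFactorial r) := by
            have hp : n * n ^ (r - 1) = n ^ r := by
              rw [← pow_succ']
              congr 1
              omega
            rw [hnr, hp]
        _ = ((r - 1) ^ 2 * n ^ r + r * n.descFactorial r) + n.descFactorial (r + 1) := by
            rw [hdesc]; ring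
        _ ≤ ((r - 1) ^ 2 * n ^ r + r * n ^ r) + n.descFactorial (r + 1) := by
            gcongr
        _ ≤ r ^ 2 * n ^ r + n.descFactorial (r + 1) := by
            have : (r - 1) ^ 2 + r ≤ r ^ 2 := by
              rcases Nat.exists_eq_add_of_le hpos with ⟨k, rfl⟩
              simp [Nat.add_sub_cancel_left]; nlinarith
            nlinarith
        _ = (r + 1 - 1) ^ 2 * n ^ (r + 1 - 1) + n.descFactorial (r + 1) := by simp

/-- With `μ` uniform on `[n]^r` and `ν` uniform on the distinct-entry tuples,
the total variation distance `(1/2)∑_ω |μ ω - ν ω|` is at most `(r-1)^2/n`. -/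
theorem stmt_5 (n r : ℕ) (hr : 1 ≤ r) (hrn : r ≤ n)
    (μ ν : (Fin r → Fin n) → ℝ)
    (hμ : ∀ ω, μ ω = 1 / (n : ℝ) ^ r)
    (hν : ∀ ω, ν ω = if Function.Injective ω then 1 / (Nat.descFactorial n r : ℝ) else 0) :
    (1 / 2) * ∑ ω : Fin r → Fin n, |μ ω - ν ω| ≤ ((r : ℝ) - 1) ^ 2 / n := by
  have hn : 1 ≤ n := le_trans hr hrn
  have hnpos : (0 : ℝ) < n := by exact_mod_cast hn
  set d : ℕ := Nat.descFactorial n r with hd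
  have hdpos : 0 < d := Nat.pos_of_ne_zero fun h =>
    absurd (Nat.descFactorial_eq_zero_iff_lt.mp h) (not_lt.mpr hrn)
  have hdR : (0 : ℝ) < d := by exact_mod_cast hdpos
  have hd_le : d ≤ n ^ r := Nat.descFactorial_le_pow n r
  have hnrpos : (0 : ℝ) < (n : ℝ) ^ r := by positivity
  -- count injective functions
  have hcard : (Finset.univ.filter (fun ω : Fin r → Fin n => Function.Injective ω)).card = d := by
    rw [← Fintype.card_subtype]
    rw [Fintype.card_congr (Equiv.subtypeInjectiveEquivEmbedding (Fin r) (Fin n))]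
    simp [Fintype.card_embedding_eq, hd]
  have habs : ∀ ω : Fin r → Fin n, |μ ω - ν ω| =
      if Function.Injective ω then 1 / (d : ℝ) - 1 / (n : ℝ) ^ r else 1 / (n : ℝ) ^ r := by
    intro ω
    rw [hμ, hν]
    split_ifs with h
    · rw [abs_sub_comm, abs_of_nonneg]
      have : (d : ℝ) ≤ (n : ℝ) ^ r := by exact_mod_cast hd_le
      have h1 : 1 / ((n : ℝ) ^ r) ≤ 1 / d := by
        apply one_div_le_one_div_of_le hdR this
      linarith
    · rw [sub_zero, abs_of_nonneg (by positivity)]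
  have hsum : ∑ ω : Fin r → Fin n, |μ ω - ν ω| = 2 * (1 - (d : ℝ) / (n : ℝ) ^ r) := by
    simp only [habs]
    rw [Finset.sum_ite, Finset.sum_const, Finset.sum_const, hcard]
    have hcard2 : (Finset.univ.filter (fun ω : Fin r → Fin n => ¬ Function.Injective ω)).card
        = n ^ r - d := by
      have := Finset.card_filter_add_card_filter_not
        (s := (Finset.univ : Finset (Fin r → Fin n)))
        (p := fun ω : Fin r → Fin n => Function.Injective ω)
      rw [hcard] at this
      have hc : (Finset.univ : Finset (Fin r → Fin n)).card = n ^ r := by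
        simp [Fintype.card_fun]
      omega
    rw [hcard2]
    have hcast : ((n ^ r - d : ℕ) : ℝ) = (n : ℝ) ^ r - d := by
      push_cast [Nat.cast_sub hd_le]; ring
    rw [nsmul_eq_mul, nsmul_eq_mul, hcast]
    field_simp
    ring
  rw [hsum]
  have hkey : (n : ℝ) ^ r ≤ ((r : ℝ) - 1) ^ 2 * (n : ℝ) ^ (r - 1) + d := by
    have := key_nat n r hrn
    have hcast : ((r - 1 : ℕ) : ℝ) = (r : ℝ) - 1 := by
      push_cast [Nat.cast_sub hr]; ring
    exact_mod_cast this
  have hpow : (n : ℝ) ^ (r - 1) * n = (n : ℝ) ^ r := by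
    rw [← pow_succ]
    congr 1
    omega
  have hgoal : 1 - (d : ℝ) / (n : ℝ) ^ r ≤ ((r : ℝ) - 1) ^ 2 / n := by
    have he : 1 - (d : ℝ) / (n : ℝ) ^ r = ((n : ℝ) ^ r - d) / (n : ℝ) ^ r := by
      field_simp
    rw [he, div_le_div_iff₀ hnrpos hnpos]
    have hkey' : (n : ℝ) ^ r - d ≤ ((r : ℝ) - 1) ^ 2 * (n : ℝ) ^ (r - 1) := by linarith
    have := mul_le_mul_of_nonneg_right hkey' hnpos.le
    nlinarith [this, hpow]
  linarith
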